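/- arXiv:1305.1009 — 2 statements merged into one kernel-verified Lean document; each statement's English description precedes it below -/
import Mathlib

section
/- Let 0 < η ≤ 1, ε > 0 small, and let v ∈ C¹ on the annulus {ξ ∈ ℝ² : R₂εη ≤ |ξ| ≤ (2b−1)R₂ε} where b > 1, R₂ > 0 are fixed. Suppose v is written in polar coordinates v(r,φ). If χ₁ is a smooth cutoff equal to 1 for t < 1 and 0 for t > 2, then for R₂εη ≤ r ≤ bR₂εη one has |v(r,φ)|² ≤ C(|ln η| + 1)·∫_{R₂εη}^{(2b−1)R₂ε} ( |∂v/∂t (t,φ)|² + ε^{-2}|v(t,φ)|² ) t dt, where C depends only on b, R₂ and χ₁ but not on ε, η, v, r, φ. -/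
/-!
Let `g(t) = v(t, φ)`. On the outer interval `[bR₂ε, (2b−1)R₂ε]`, whose length is comparable to `ε`,
`g²` attains its minimum at some `w`, and averaging against the weight `t` bounds `g(w)²` by the
`ε⁻²|g|² t` part of the energy. Then `g(r) = g(w) − ∫_r^w g'`, and Cauchy–Schwarz with weight `1/t`
bounds `(∫_r^w g')²` by `log (w/r) ≤ log (2b−1) + |log η|` times the `|g'|² t` part.
-/

open MeasureTheory Set

theorem sq_integral_mul_le_integral_sq_mul_integral_sq {α : Type*} [MeasurableSpace α]
    {μ : Measure α} {f h : α → ℝ} (hf : Integrable (fun x => f x ^ 2) μ)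
    (hh : Integrable (fun x => h x ^ 2) μ) (hfh : Integrable (fun x => f x * h x) μ) :
    (∫ x, f x * h x ∂μ) ^ 2 ≤ (∫ x, f x ^ 2 ∂μ) * ∫ x, h x ^ 2 ∂μ := by
  have hquad : ∀ c : ℝ, 0 ≤ (∫ x, f x ^ 2 ∂μ) * (c * c) + 2 * (∫ x, f x * h x ∂μ) * c
      + ∫ x, h x ^ 2 ∂μ := by
    intro c
    have hexp : ∫ x, (c * f x + h x) ^ 2 ∂μ = (∫ x, f x ^ 2 ∂μ) * (c * c)
        + 2 * (∫ x, f x * h x ∂μ) * c + ∫ x, h x ^ 2 ∂μ := by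
      have hsplit : (fun x => (c * f x + h x) ^ 2)
          = fun x => ((c * c) * f x ^ 2 + (2 * c) * (f x * h x)) + h x ^ 2 := by
        funext x; ring
      rw [hsplit, integral_add (f := fun x => c * c * f x ^ 2 + 2 * c * (f x * h x))
        ((hf.const_mul _).add (hfh.const_mul _)) hh,
        integral_add (hf.const_mul _) (hfh.const_mul _), integral_const_mul, integral_const_mul]
      ring
    exact hexp ▸ integral_nonneg fun x => sq_nonneg _
  have := discrim_le_zero hquad
  rw [discrim] at this
  nlinarith

theorem sq_sub_le_log_div_mul_integral_deriv_sq_mul {g : ℝ → ℝ} (hg : ContDiff ℝ 1 g)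
    {r w : ℝ} (hr : 0 < r) (hrw : r ≤ w) :
    (g w - g r) ^ 2 ≤ Real.log (w / r) * ∫ t in Ioo r w, deriv g t ^ 2 * t := by
  have hg' : Continuous (deriv g) := hg.continuous_deriv_one
  have hpos : ∀ t ∈ Icc r w, 0 < t := fun t ht => hr.trans_le ht.1
  have hsqrt : ContinuousOn (fun t => (Real.sqrt t)⁻¹) (Icc r w) :=
    Real.continuous_sqrt.continuousOn.inv₀ fun t ht => (Real.sqrt_pos.2 (hpos t ht)).ne'
  have hintegrable : ∀ {F : ℝ → ℝ}, ContinuousOn F (Icc r w) → IntegrableOn F (Ioo r w) :=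
    fun hF => hF.integrableOn_Icc.mono_set Ioo_subset_Icc_self
  have hcs := sq_integral_mul_le_integral_sq_mul_integral_sq (μ := volume.restrict (Ioo r w))
    (hintegrable (hsqrt.pow 2)) (hintegrable ((Real.continuous_sqrt.mul hg').continuousOn.pow 2))
    (hintegrable (hsqrt.mul (Real.continuous_sqrt.mul hg').continuousOn))
  have hftc : g w - g r = ∫ t in Ioo r w, (Real.sqrt t)⁻¹ * (Real.sqrt t * deriv g t) := by
    rw [← intervalIntegral.integral_deriv_eq_sub (fun t _ => hg.differentiable one_ne_zero t)
      (hg'.intervalIntegrable r w), intervalIntegral.integral_of_le hrw,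
      integral_Ioc_eq_integral_Ioo]
    refine setIntegral_congr_fun measurableSet_Ioo fun t ht => ?_
    rw [inv_mul_cancel_left₀ (Real.sqrt_pos.2 (hpos t (Ioo_subset_Icc_self ht))).ne']
  have hlog : ∫ t in Ioo r w, (Real.sqrt t)⁻¹ ^ 2 = Real.log (w / r) := by
    rw [← integral_inv (notMem_uIcc_of_lt hr (hr.trans_le hrw)),
      intervalIntegral.integral_of_le hrw, integral_Ioc_eq_integral_Ioo]
    refine setIntegral_congr_fun measurableSet_Ioo fun t ht => ?_
    rw [inv_pow, Real.sq_sqrt (hpos t (Ioo_subset_Icc_self ht)).le]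
  have hweight :
      ∫ t in Ioo r w, (Real.sqrt t * deriv g t) ^ 2 = ∫ t in Ioo r w, deriv g t ^ 2 * t := by
    refine setIntegral_congr_fun measurableSet_Ioo fun t ht => ?_
    rw [mul_pow, Real.sq_sqrt (hpos t (Ioo_subset_Icc_self ht)).le, mul_comm]
  rwa [hftc, ← hlog, ← hweight]

theorem exists_mem_Icc_mul_integral_le_integral_mul {f ρ : ℝ → ℝ} {s B : ℝ} (hsB : s ≤ B)
    (hf : ContinuousOn f (Icc s B)) (hρ : IntegrableOn ρ (Ioo s B))
    (hρ0 : ∀ x ∈ Ioo s B, 0 ≤ ρ x) :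
    ∃ w ∈ Icc s B, f w * ∫ x in Ioo s B, ρ x ≤ ∫ x in Ioo s B, f x * ρ x := by
  obtain ⟨w, hw, hmin⟩ := isCompact_Icc.exists_isMinOn (nonempty_Icc.2 hsB) hf
  refine ⟨w, hw, ?_⟩
  rw [← integral_const_mul]
  exact setIntegral_mono_on (hρ.const_mul _)
    (hρ.continuousOn_mul_of_subset hf isCompact_Icc measurableSet_Ioo Ioo_subset_Icc_self)
    measurableSet_Ioo fun x hx =>
      mul_le_mul_of_nonneg_right (hmin (Ioo_subset_Icc_self hx)) (hρ0 x hx)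

theorem setIntegral_le_setIntegral_of_subset {α : Type*} [MeasurableSpace α] {μ : Measure α}
    {f F : α → ℝ} {s t : Set α} (hs : MeasurableSet s) (ht : MeasurableSet t) (hst : s ⊆ t)
    (hf : IntegrableOn f s μ) (hF : IntegrableOn F t μ) (hle : ∀ x ∈ s, f x ≤ F x)
    (hF0 : ∀ x ∈ t, 0 ≤ F x) :
    ∫ x in s, f x ∂μ ≤ ∫ x in t, F x ∂μ :=
  (setIntegral_mono_on hf (hF.mono_set hst) hs hle).trans
    (setIntegral_mono_set hF (ae_restrict_of_forall_mem ht hF0) hst.eventuallyLE)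

theorem sq_le_mul_integral_deriv_sq_add_sq_mul {g : ℝ → ℝ} (hg : ContDiff ℝ 1 g)
    {κ a r s B : ℝ} (hκ : 0 < κ) (ha : 0 < a) (har : a ≤ r) (hrs : r ≤ s) (hsB : s < B) :
    g r ^ 2 ≤ (4 / (κ * (B ^ 2 - s ^ 2)) + 2 * Real.log (B / a)) *
      ∫ t in Ioo a B, (deriv g t ^ 2 + κ * g t ^ 2) * t := by
  set E := ∫ t in Ioo a B, (deriv g t ^ 2 + κ * g t ^ 2) * t
  have hg' : Continuous (deriv g) := hg.continuous_deriv_one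
  have hintegrable : ∀ {F : ℝ → ℝ} {x y : ℝ}, Continuous F → IntegrableOn F (Ioo x y) :=
    fun hF => hF.integrableOn_Icc.mono_set Ioo_subset_Icc_self
  have hE : IntegrableOn (fun t => (deriv g t ^ 2 + κ * g t ^ 2) * t) (Ioo a B) :=
    hintegrable (by fun_prop)
  have hE0 : ∀ t ∈ Ioo a B, 0 ≤ (deriv g t ^ 2 + κ * g t ^ 2) * t :=
    fun t ht => by have := ha.trans ht.1; positivity
  have hBs : 0 < B ^ 2 - s ^ 2 := by nlinarith
  obtain ⟨w, hw, hgw⟩ := exists_mem_Icc_mul_integral_le_integral_mul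
    (f := fun t => g t ^ 2) (ρ := fun t => t) hsB.le
    (hg.continuous.pow 2).continuousOn (hintegrable continuous_id)
    fun t ht => ha.le.trans ((har.trans hrs).trans ht.1.le)
  rw [integral_Ioc_eq_integral_Ioo.symm, ← intervalIntegral.integral_of_le hsB.le,
    integral_id] at hgw
  have hsE : κ * ∫ t in Ioo s B, g t ^ 2 * t ≤ E := by
    rw [← integral_const_mul]
    refine setIntegral_le_setIntegral_of_subset measurableSet_Ioo measurableSet_Ioo
      (Ioo_subset_Ioo_left (har.trans hrs)) (hintegrable (by fun_prop)) hE (fun t ht => ?_) hE0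
    have := (ha.trans_le (har.trans hrs)).trans ht.1
    nlinarith [sq_nonneg (deriv g t)]
  have hwE : g w ^ 2 ≤ 2 / (κ * (B ^ 2 - s ^ 2)) * E := by
    rw [div_mul_eq_mul_div, le_div_iff₀ (by positivity)]
    nlinarith
  have hrw : r ≤ w := hrs.trans hw.1
  have hr : 0 < r := ha.trans_le har
  have hlog : Real.log (w / r) ≤ Real.log (B / a) :=
    Real.log_le_log (div_pos (hr.trans_le hrw) hr)
      (div_le_div₀ (ha.le.trans (har.trans (hrw.trans hw.2))) hw.2 ha har)
  have hderivE : ∫ t in Ioo r w, deriv g t ^ 2 * t ≤ E := by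
    refine setIntegral_le_setIntegral_of_subset measurableSet_Ioo measurableSet_Ioo
      (Ioo_subset_Ioo har hw.2) (hintegrable (by fun_prop)) hE (fun t ht => ?_) hE0
    have : 0 ≤ κ * g t ^ 2 * t := mul_nonneg (by positivity) (hr.trans ht.1).le
    linarith
  have hdiff := (sq_sub_le_log_div_mul_integral_deriv_sq_mul hg hr hrw).trans
    (mul_le_mul hlog hderivE
      (setIntegral_nonneg measurableSet_Ioo fun t ht => by have := hr.trans ht.1; positivity)
      (Real.log_nonneg ((one_le_div ha).2 (har.trans (hrw.trans hw.2)))))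
  calc g r ^ 2 ≤ 2 * g w ^ 2 + 2 * (g w - g r) ^ 2 := by nlinarith [sq_nonneg (2 * g w - g r)]
    _ ≤ 2 * (2 / (κ * (B ^ 2 - s ^ 2)) * E) + 2 * (Real.log (B / a) * E) := by gcongr
    _ = _ := by ring

/-- Logarithmic trace estimate in polar coordinates: for `v ∈ C¹` written as `v(r,φ)`,
if `R₂εη ≤ r ≤ bR₂εη` then
`|v(r,φ)|² ≤ C(|ln η| + 1) ∫_{R₂εη}^{(2b−1)R₂ε} (|∂v/∂t|² + ε⁻²|v|²) t dt`,
with `C` depending only on `b`, `R₂`. -/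
theorem stmt_3 (b R₂ : ℝ) (hb : 1 < b) (hR₂ : 0 < R₂) :
    ∃ C > (0:ℝ), ∀ ε > (0:ℝ), ∀ η : ℝ, 0 < η → η ≤ 1 →
      ∀ v : ℝ × ℝ → ℝ, ContDiff ℝ 1 v →
        ∀ r φ : ℝ, R₂ * ε * η ≤ r → r ≤ b * R₂ * ε * η →
          (v (r, φ))^2 ≤ C * (|Real.log η| + 1) *
            (∫ t in Ioo (R₂ * ε * η) ((2*b - 1) * R₂ * ε),
              ((deriv (fun s => v (s, φ)) t)^2 + ε⁻¹^2 * (v (t, φ))^2) * t) := by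
  set K := ((2 * b - 1) ^ 2 - b ^ 2) * R₂ ^ 2
  have hK : 0 < K := mul_pos (by nlinarith) (by positivity)
  have hlogb : 0 < Real.log (2 * b - 1) := Real.log_pos (by linarith)
  refine ⟨4 / K + 2 * Real.log (2 * b - 1) + 2, by positivity, ?_⟩
  intro ε hε η hη hη1 v hv r φ hra hrb
  have key := sq_le_mul_integral_deriv_sq_add_sq_mul (g := fun s => v (s, φ)) (κ := ε⁻¹ ^ 2)
    (s := b * R₂ * ε) (B := (2 * b - 1) * R₂ * ε) (hv.comp (contDiff_id.prodMk contDiff_const))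
    (by positivity) (by positivity) hra
    (hrb.trans (mul_le_of_le_one_right (by positivity) hη1))
    (mul_lt_mul_of_pos_right (mul_lt_mul_of_pos_right (by linarith) hR₂) hε)
  have hscale : ε⁻¹ ^ 2 * (((2 * b - 1) * R₂ * ε) ^ 2 - (b * R₂ * ε) ^ 2) = K := by
    field_simp
    ring
  have hlog : Real.log ((2 * b - 1) * R₂ * ε / (R₂ * ε * η)) ≤
      Real.log (2 * b - 1) + |Real.log η| := by
    rw [show (2 * b - 1) * R₂ * ε / (R₂ * ε * η) = (2 * b - 1) / η by field_simp,
      Real.log_div (by linarith) hη.ne']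
    linarith [neg_le_abs (Real.log η)]
  refine key.trans (mul_le_mul_of_nonneg_right ?_ (setIntegral_nonneg measurableSet_Ioo
    fun t ht => ?_))
  · rw [hscale]
    nlinarith [abs_nonneg (Real.log η), div_pos four_pos hK]
  · have : 0 < t := (by positivity : (0:ℝ) < R₂ * ε * η).trans ht.1
    positivity
end

section
/- Let (c^u_p)_{p∈ℤ}, (c^v_q)_{q∈ℤ}, (c^α_m)_{m∈ℤ} be sequences of complex numbers with A² := Σ_p |c^u_p|²(1+|p|)³ < ∞, B² := Σ_q |c^v_q|²(1+|q|) < ∞, and K² := Σ_m |c^α_m|²/(1+|m|) < ∞. Then Σ_{p,q} |c^u_p||c^v_q||c^α_{q−p}| ≤ C·A·B·K for an absolute constant C. -/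
/-!
Weighted Cauchy–Schwarz with the weight `(1+|p|)³(1+|q|)` bounds the double sum by
`A B (Σ_{p,q} |c^α_{q-p}|² / ((1+|p|)³(1+|q|)))^{1/2}`. Since `1+|q-p| ≤ 2(1+|p|)(1+|q|)`,
each term of the last sum is at most `2 (1+|p|)⁻² |c^α_{q-p}|² / (1+|q-p|)`, and the shear
`(p, q) ↦ (p, q - p)` turns the sum of these into `2 (Σ_p (1+|p|)⁻²) K²`.
-/

open Real

theorem tsum_mul_le_sqrt_mul_sqrt_of_weight {ι : Type*} (f g w : ι → ℝ)
    (hf : ∀ i, 0 ≤ f i) (hg : ∀ i, 0 ≤ g i) (hw : ∀ i, 0 < w i)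
    (hfw : Summable fun i => f i ^ 2 * w i) (hgw : Summable fun i => g i ^ 2 / w i) :
    ∑' i, f i * g i ≤ √(∑' i, f i ^ 2 * w i) * √(∑' i, g i ^ 2 / w i) := by
  have hsqrt : ∀ i, √(w i) ≠ 0 := fun i => (sqrt_pos.2 (hw i)).ne'
  have hF : ∀ i, (f i * √(w i)) ^ (2 : ℝ) = f i ^ 2 * w i := fun i => by
    rw [rpow_two, mul_pow, sq_sqrt (hw i).le]
  have hG : ∀ i, (g i / √(w i)) ^ (2 : ℝ) = g i ^ 2 / w i := fun i => by
    rw [rpow_two, div_pow, sq_sqrt (hw i).le]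
  have hCS := inner_le_Lp_mul_Lq_tsum_of_nonneg HolderConjugate.two_two
    (fun i => mul_nonneg (hf i) (sqrt_nonneg _)) (fun i => div_nonneg (hg i) (sqrt_nonneg _))
    (hfw.congr fun i => (hF i).symm) (hgw.congr fun i => (hG i).symm)
  simp only [hF, hG, ← sqrt_eq_rpow] at hCS
  refine le_trans (le_of_eq (tsum_congr fun i => ?_)) hCS
  field_simp [hsqrt i]

theorem hasSum_mul_comp_sub {G : Type*} [AddGroup G] {h k : G → ℝ}
    (hh : Summable h) (hk : Summable k) (hh0 : ∀ p, 0 ≤ h p) (hk0 : ∀ m, 0 ≤ k m) :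
    HasSum (fun z : G × G => h z.1 * k (z.2 - z.1)) ((∑' p, h p) * ∑' m, k m) :=
  (Equiv.hasSum_iff (Equiv.prodShear (Equiv.refl G) Equiv.subRight)).2 <|
    hh.hasSum.mul hk.hasSum (hh.mul_of_nonneg hk hh0 hk0)

theorem summable_one_div_one_add_abs_int_pow {k : ℕ} (hk : 1 < k) :
    Summable fun n : ℤ => 1 / (1 + |(n : ℝ)|) ^ k := by
  have hnat : Summable fun n : ℕ => 1 / (1 + (n : ℝ)) ^ k :=
    ((summable_nat_add_iff 1).2 (summable_one_div_nat_pow.2 hk)).congr fun n => by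
      push_cast; ring_nf
  exact .of_nat_of_neg (hnat.congr fun n => by simp) (hnat.congr fun n => by simp)

theorem one_add_abs_sub_le (p q : ℝ) : 1 + |q - p| ≤ 2 * ((1 + |p|) * (1 + |q|)) := by
  linarith [abs_sub q p, abs_nonneg p, abs_nonneg q, mul_nonneg (abs_nonneg p) (abs_nonneg q)]

theorem div_one_add_abs_pow_three_mul_le {c : ℝ} (hc : 0 ≤ c) (p q : ℝ) :
    c / ((1 + |p|) ^ 3 * (1 + |q|)) ≤ 2 * (1 / (1 + |p|) ^ 2 * (c / (1 + |q - p|))) := by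
  have hx : 0 < 1 + |p| := by positivity
  rw [div_le_iff₀ (by positivity)]
  field_simp
  nlinarith [mul_le_mul_of_nonneg_left (one_add_abs_sub_le p q) (mul_nonneg hc hx.le)]

theorem summable_and_tsum_div_weight_le {c : ℤ → ℝ} (hc0 : ∀ m, 0 ≤ c m)
    (hc : Summable fun m : ℤ => c m / (1 + |(m : ℝ)|)) :
    Summable (fun z : ℤ × ℤ => c (z.2 - z.1) / ((1 + |(z.1 : ℝ)|) ^ 3 * (1 + |(z.2 : ℝ)|))) ∧
      ∑' z : ℤ × ℤ, c (z.2 - z.1) / ((1 + |(z.1 : ℝ)|) ^ 3 * (1 + |(z.2 : ℝ)|)) ≤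
        2 * ((∑' p : ℤ, 1 / (1 + |(p : ℝ)|) ^ 2) * ∑' m : ℤ, c m / (1 + |(m : ℝ)|)) := by
  have hconv := hasSum_mul_comp_sub (summable_one_div_one_add_abs_int_pow one_lt_two) hc
    (fun _ => by positivity) fun m => div_nonneg (hc0 m) (by positivity)
  have hle : ∀ z : ℤ × ℤ, c (z.2 - z.1) / ((1 + |(z.1 : ℝ)|) ^ 3 * (1 + |(z.2 : ℝ)|)) ≤
      2 * (1 / (1 + |(z.1 : ℝ)|) ^ 2 * (c (z.2 - z.1) / (1 + |((z.2 - z.1 : ℤ) : ℝ)|))) :=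
    fun z => by simpa using div_one_add_abs_pow_three_mul_le (hc0 (z.2 - z.1)) z.1 z.2
  have hsum := Summable.of_nonneg_of_le (fun z => div_nonneg (hc0 _) (by positivity)) hle
    (hconv.summable.mul_left 2)
  refine ⟨hsum, ?_⟩
  rw [← hconv.tsum_eq, ← tsum_mul_left]
  exact hsum.tsum_le_tsum hle (hconv.summable.mul_left 2)

/-- Discrete bilinear estimate: if `A² = Σ|c^u_p|²(1+|p|)³`, `B² = Σ|c^v_q|²(1+|q|)` and
`K² = Σ|c^α_m|²/(1+|m|)` are finite, then `Σ_{p,q}|c^u_p||c^v_q||c^α_{q−p}| ≤ C·A·B·K`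
for an absolute constant `C`. -/
theorem stmt_14 : ∃ C > (0:ℝ), ∀ cu cv ca : ℤ → ℂ,
    Summable (fun p : ℤ => ‖cu p‖^2 * (1 + |(p:ℝ)|)^3) →
    Summable (fun q : ℤ => ‖cv q‖^2 * (1 + |(q:ℝ)|)) →
    Summable (fun m : ℤ => ‖ca m‖^2 / (1 + |(m:ℝ)|)) →
    (∑' pq : ℤ × ℤ, ‖cu pq.1‖ * ‖cv pq.2‖ * ‖ca (pq.2 - pq.1)‖) ≤
      C * Real.sqrt (∑' p : ℤ, ‖cu p‖^2 * (1 + |(p:ℝ)|)^3) *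
        Real.sqrt (∑' q : ℤ, ‖cv q‖^2 * (1 + |(q:ℝ)|)) *
        Real.sqrt (∑' m : ℤ, ‖ca m‖^2 / (1 + |(m:ℝ)|)) := by
  have hS := summable_one_div_one_add_abs_int_pow (k := 2) one_lt_two
  refine ⟨√(2 * ∑' p : ℤ, 1 / (1 + |(p : ℝ)|) ^ 2),
    sqrt_pos.2 (mul_pos two_pos (hS.tsum_pos (fun _ => by positivity) 0 (by simp))), ?_⟩
  intro cu cv ca hu hv ha
  obtain ⟨hα, hα_le⟩ := summable_and_tsum_div_weight_le (fun m => sq_nonneg ‖ca m‖) ha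
  set S := ∑' p : ℤ, 1 / (1 + |(p : ℝ)|) ^ 2
  set A2 := ∑' p : ℤ, ‖cu p‖ ^ 2 * (1 + |(p : ℝ)|) ^ 3
  set B2 := ∑' q : ℤ, ‖cv q‖ ^ 2 * (1 + |(q : ℝ)|)
  set K2 := ∑' m : ℤ, ‖ca m‖ ^ 2 / (1 + |(m : ℝ)|)
  have huv : HasSum (fun z : ℤ × ℤ =>
      (‖cu z.1‖ * ‖cv z.2‖) ^ 2 * ((1 + |(z.1 : ℝ)|) ^ 3 * (1 + |(z.2 : ℝ)|))) (A2 * B2) := by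
    refine (hu.hasSum.mul hv.hasSum
      (hu.mul_of_nonneg hv (fun _ => by positivity) fun _ => by positivity)).congr_fun fun z => ?_
    ring
  calc ∑' z : ℤ × ℤ, ‖cu z.1‖ * ‖cv z.2‖ * ‖ca (z.2 - z.1)‖
      ≤ √(A2 * B2) *
          √(∑' z : ℤ × ℤ, ‖ca (z.2 - z.1)‖ ^ 2 / ((1 + |(z.1 : ℝ)|) ^ 3 * (1 + |(z.2 : ℝ)|))) := by
        rw [← huv.tsum_eq]
        exact tsum_mul_le_sqrt_mul_sqrt_of_weight _ _ _ (fun _ => by positivity)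
          (fun _ => by positivity) (fun _ => by positivity) huv.summable hα
    _ ≤ √(A2 * B2) * √(2 * (S * K2)) := by gcongr
    _ = √(2 * S) * √A2 * √B2 * √K2 := by
        rw [sqrt_mul (by positivity), ← mul_assoc, sqrt_mul (by positivity)]
        ring
end
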